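/- (Gibbs variational principle.) Let H be a Hermitian n×n complex matrix. Then for every positive definite n×n density matrix Γ, Tr[HΓ] + Tr[Γ log Γ] ≥ −log Tr[exp(−H)], with equality if and only if Γ = exp(−H)/Tr[exp(−H)]. Here log Γ is defined by the functional calculus. -/

import Mathlib

open Matrix
open scoped ComplexOrder

/-- Functional calculus for Hermitian matrices: apply `f` to the eigenvalues. -/
noncomputable def matFun {n : ℕ} (f : ℝ → ℝ) (M : Matrix (Fin n) (Fin n) ℂ) :
    Matrix (Fin n) (Fin n) ℂ :=
  if h : M.IsHermitian then
    (h.eigenvectorUnitary : Matrix (Fin n) (Fin n) ℂ) *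
      Matrix.diagonal (fun i => (f (h.eigenvalues i) : ℂ)) *
      star (h.eigenvectorUnitary : Matrix (Fin n) (Fin n) ℂ)
  else 0

/-- Matrix logarithm via the functional calculus. -/
noncomputable def matLog {n : ℕ} (M : Matrix (Fin n) (Fin n) ℂ) :
    Matrix (Fin n) (Fin n) ℂ :=
  matFun Real.log M

/-!
Let `G = exp(-H) / Z` with `Z = Tr exp(-H)`. Then `log G = -H - log Z`, so
`Tr[HΓ] + Tr[Γ log Γ] + log Z` is the relative entropy `Tr[Γ (log Γ - log G)]`, and the theorem
is Klein's inequality: this is `≥ 0`, with equality iff `Γ = G`. To prove it, diagonalise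
`Γ = ∑ pᵢ |uᵢ⟩⟨uᵢ|` and `G = ∑ qⱼ |vⱼ⟩⟨vⱼ|`. The overlaps `cᵢⱼ = |⟨uᵢ, vⱼ⟩|²` form a doubly
stochastic matrix, which turns the relative entropy into `∑ cᵢⱼ qⱼ klFun (pᵢ / qⱼ)`, where
`klFun x = x log x + 1 - x` is nonnegative and vanishes only at `x = 1`. So the sum vanishes
iff `pᵢ = qⱼ` whenever `⟨uᵢ, vⱼ⟩ ≠ 0`, which says exactly that `Γ = G`.
-/

open InformationTheory Unitary

lemma mul_klFun_div {p q : ℝ} (hq : q ≠ 0) :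
    q * klFun (p / q) = p * Real.log p - p * Real.log q - p + q := by
  rcases eq_or_ne p 0 with rfl | hp
  · simp [klFun_zero]
  · rw [klFun_apply, Real.log_div hp hq]
    field_simp
    ring

lemma mul_klFun_div_nonneg {p q : ℝ} (hp : 0 ≤ p) (hq : 0 < q) : 0 ≤ q * klFun (p / q) :=
  mul_nonneg hq.le (klFun_nonneg (div_nonneg hp hq.le))

lemma mul_klFun_div_eq_zero_iff {p q : ℝ} (hp : 0 ≤ p) (hq : 0 < q) :
    q * klFun (p / q) = 0 ↔ p = q := by
  rw [mul_eq_zero, klFun_eq_zero_iff (div_nonneg hp hq.le), div_eq_one_iff_eq hq.ne',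
    or_iff_right hq.ne']

section

variable {ι : Type*} [Fintype ι]

lemma nonempty_of_trace_eq_one {R : Type*} [AddCommMonoid R] [One R] [NeZero (1 : R)]
    {A : Matrix ι ι R} (hA : A.trace = 1) : Nonempty ι := by
  by_contra hι
  rw [not_nonempty_iff] at hι
  exact one_ne_zero (hA.symm.trans (by simp [trace]))

variable [DecidableEq ι]

lemma sum_mul_log_sub_sum_sum_mul_log_eq {c : Matrix ι ι ℝ} (hc : c ∈ doublyStochastic ℝ ι)
    (p : ι → ℝ) {q : ι → ℝ} (hq : ∀ j, q j ≠ 0) :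
    ∑ i, p i * Real.log (p i) - ∑ i, ∑ j, c i j * p i * Real.log (q j) =
      ∑ i, ∑ j, c i j * (q j * klFun (p i / q j)) + (∑ i, p i - ∑ j, q j) := by
  obtain ⟨-, hrow, hcol⟩ := mem_doublyStochastic_iff_sum.mp hc
  have hterm : ∀ i j, c i j * (q j * klFun (p i / q j)) =
      c i j * (p i * Real.log (p i)) - c i j * p i * Real.log (q j) - c i j * p i + c i j * q j :=
    fun i j => by rw [mul_klFun_div (hq j)]; ring
  simp only [hterm, Finset.sum_add_distrib, Finset.sum_sub_distrib, ← Finset.sum_mul,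
    hrow, one_mul]
  rw [Finset.sum_comm (f := fun i j => c i j * q j)]
  simp only [← Finset.sum_mul, hcol, one_mul]
  ring

lemma normSq_mem_doublyStochastic {W : Matrix ι ι ℂ} (hW : W ∈ unitary (Matrix ι ι ℂ)) :
    Matrix.of (fun i j => Complex.normSq (W i j)) ∈ doublyStochastic ℝ ι := by
  refine mem_doublyStochastic_iff_sum.mpr
    ⟨fun i j => Complex.normSq_nonneg _, fun i => ?_, fun j => ?_⟩
  · have h : (W * star W) i i = (1 : Matrix ι ι ℂ) i i := by rw [mul_star_self_of_mem hW]
    simp only [mul_apply, star_apply, RCLike.star_def, Complex.mul_conj, one_apply_eq] at h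
    exact_mod_cast h
  · have h : (star W * W) j j = (1 : Matrix ι ι ℂ) j j := by rw [star_mul_self_of_mem hW]
    simp only [mul_apply, star_apply, RCLike.star_def, mul_comm (starRingEnd ℂ _),
      Complex.mul_conj, one_apply_eq] at h
    exact_mod_cast h

lemma trace_conjStarAlgAut {R : Type*} [CommSemiring R] [StarRing R] (U : unitary (Matrix ι ι R))
    (A : Matrix ι ι R) : (conjStarAlgAut R _ U A).trace = A.trace := by
  rw [conjStarAlgAut_apply, trace_mul_cycle, coe_star_mul_self, one_mul]

lemma trace_conjStarAlgAut_diagonal_mul (U V : unitary (Matrix ι ι ℂ)) (a b : ι → ℂ) :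
    (conjStarAlgAut ℂ _ U (diagonal a) * conjStarAlgAut ℂ _ V (diagonal b)).trace =
      ∑ i, ∑ j, a i * b j * Complex.normSq ((star (U : Matrix ι ι ℂ) * V) i j) := by
  set W := star (U : Matrix ι ι ℂ) * V
  have hconj : conjStarAlgAut ℂ _ (star U)
      (conjStarAlgAut ℂ _ U (diagonal a) * conjStarAlgAut ℂ _ V (diagonal b)) =
      diagonal a * W * diagonal b * star W := by
    simp only [conjStarAlgAut_apply, W, coe_star, star_mul, star_star, Matrix.mul_assoc]
    rw [← Matrix.mul_assoc (star _), star_mul_self_of_mem U.2, Matrix.one_mul]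
  rw [← trace_conjStarAlgAut (star U), hconj, trace]
  refine Finset.sum_congr rfl fun i _ => ?_
  rw [diag_apply, mul_apply]
  refine Finset.sum_congr rfl fun j _ => ?_
  rw [mul_diagonal, diagonal_mul, star_apply, RCLike.star_def, ← Complex.mul_conj]
  ring

lemma conjStarAlgAut_eq_conjStarAlgAut_iff {R : Type*} [CommRing R] [StarRing R]
    (U V : unitary (Matrix ι ι R)) (A B : Matrix ι ι R) :
    conjStarAlgAut R _ U A = conjStarAlgAut R _ V B ↔
      A * (star (U : Matrix ι ι R) * V) = star (U : Matrix ι ι R) * V * B := by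
  have hUU := star_mul_self_of_mem U.2
  have hUU' := mul_star_self_of_mem U.2
  have hVV := star_mul_self_of_mem V.2
  have hVV' := mul_star_self_of_mem V.2
  rw [conjStarAlgAut_apply, conjStarAlgAut_apply]
  constructor
  · intro h
    calc A * (star ↑U * ↑V) = star ↑U * (↑U * A * star ↑U) * ↑V := by
          simp only [← Matrix.mul_assoc, hUU, Matrix.one_mul]
      _ = star ↑U * ↑V * B := by
          rw [h]; simp only [Matrix.mul_assoc, hVV, Matrix.mul_one]
  · intro h
    calc ↑U * A * star ↑U = ↑U * (A * (star ↑U * ↑V)) * star ↑V := by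
          simp only [Matrix.mul_assoc, hVV', Matrix.mul_one]
      _ = ↑V * B * star ↑V := by
          rw [h]; simp only [← Matrix.mul_assoc, hUU', Matrix.one_mul]

lemma conjStarAlgAut_diagonal_eq_iff {R : Type*} [CommRing R] [StarRing R] [NoZeroDivisors R]
    (U V : unitary (Matrix ι ι R)) (a b : ι → R) :
    conjStarAlgAut R _ U (diagonal a) = conjStarAlgAut R _ V (diagonal b) ↔
      ∀ i j, (star (U : Matrix ι ι R) * V) i j = 0 ∨ a i = b j := by
  rw [conjStarAlgAut_eq_conjStarAlgAut_iff, ← Matrix.ext_iff]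
  simp only [mul_diagonal, diagonal_mul, mul_comm (a _), mul_eq_mul_left_iff, or_comm]

/-- Since `Real.log 0 = 0`, `cfc Real.log ρ` builds in the convention `0 log 0 = 0`, so this is
the Umegaki relative entropy also for singular `ρ`. -/
noncomputable def relEntropy (ρ σ : Matrix ι ι ℂ) : ℂ :=
  (ρ * (cfc Real.log ρ - cfc Real.log σ)).trace

lemma Matrix.IsHermitian.cfc_eq_conjStarAlgAut {A : Matrix ι ι ℂ} (hA : A.IsHermitian)
    (f : ℝ → ℝ) :
    cfc f A = conjStarAlgAut ℂ _ hA.eigenvectorUnitary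
      (diagonal (fun i => (f (hA.eigenvalues i) : ℂ))) :=
  hA.cfc_eq f

theorem relEntropy_eq_sum_klFun {ρ σ : Matrix ι ι ℂ} (hρ : ρ.PosSemidef) (hσ : σ.PosDef) :
    relEntropy ρ σ =
      ((∑ i, ∑ j, Complex.normSq ((star (hρ.isHermitian.eigenvectorUnitary : Matrix ι ι ℂ) *
          hσ.isHermitian.eigenvectorUnitary) i j) *
        (hσ.isHermitian.eigenvalues j *
          klFun (hρ.isHermitian.eigenvalues i / hσ.isHermitian.eigenvalues j)) : ℝ) : ℂ) +
      (ρ.trace - σ.trace) := by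
  set U := hρ.isHermitian.eigenvectorUnitary
  set V := hσ.isHermitian.eigenvectorUnitary
  set p := hρ.isHermitian.eigenvalues
  set q := hσ.isHermitian.eigenvalues
  have hρU : ρ = conjStarAlgAut ℂ _ U (diagonal fun i => (p i : ℂ)) :=
    hρ.isHermitian.spectral_theorem
  have hentropy : (ρ * cfc Real.log ρ).trace = ((∑ i, p i * Real.log (p i) : ℝ) : ℂ) := by
    nth_rw 1 [hρU]
    rw [hρ.isHermitian.cfc_eq_conjStarAlgAut, ← map_mul, diagonal_mul_diagonal,
      trace_conjStarAlgAut, trace_diagonal]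
    push_cast; rfl
  have hcross : (ρ * cfc Real.log σ).trace =
      ((∑ i, ∑ j, Complex.normSq ((star (U : Matrix ι ι ℂ) * V) i j) * p i * Real.log (q j) : ℝ) :
        ℂ) := by
    rw [hσ.isHermitian.cfc_eq_conjStarAlgAut, hρU, trace_conjStarAlgAut_diagonal_mul]
    push_cast
    refine Finset.sum_congr rfl fun i _ => Finset.sum_congr rfl fun j _ => ?_
    ring
  have hW : star (U : Matrix ι ι ℂ) * V ∈ unitary (Matrix ι ι ℂ) := mul_mem (star_mem U.2) V.2
  have hsum := sum_mul_log_sub_sum_sum_mul_log_eq (normSq_mem_doublyStochastic hW) p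
    fun j => (hσ.eigenvalues_pos j).ne'
  simp only [of_apply] at hsum
  rw [relEntropy, Matrix.mul_sub, trace_sub, hentropy, hcross,
    hρ.isHermitian.trace_eq_sum_eigenvalues, hσ.isHermitian.trace_eq_sum_eigenvalues,
    ← Complex.ofReal_sub, hsum]
  push_cast
  rfl

section Klein

variable {ρ σ : Matrix ι ι ℂ}

theorem relEntropy_nonneg (hρ : ρ.PosSemidef) (hσ : σ.PosDef) (htr : ρ.trace = σ.trace) :
    0 ≤ relEntropy ρ σ := by
  rw [relEntropy_eq_sum_klFun hρ hσ, htr, sub_self, add_zero, Complex.zero_le_real]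
  exact Finset.sum_nonneg fun i _ => Finset.sum_nonneg fun j _ => mul_nonneg (Complex.normSq_nonneg _)
    (mul_klFun_div_nonneg (hρ.eigenvalues_nonneg i) (hσ.eigenvalues_pos j))

theorem relEntropy_eq_zero_iff (hρ : ρ.PosSemidef) (hσ : σ.PosDef) (htr : ρ.trace = σ.trace) :
    relEntropy ρ σ = 0 ↔ ρ = σ := by
  set U := hρ.isHermitian.eigenvectorUnitary
  set V := hσ.isHermitian.eigenvectorUnitary
  set p := hρ.isHermitian.eigenvalues
  set q := hσ.isHermitian.eigenvalues
  have hterm : ∀ i j, 0 ≤ Complex.normSq ((star (U : Matrix ι ι ℂ) * V) i j) *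
      (q j * klFun (p i / q j)) := fun i j => mul_nonneg (Complex.normSq_nonneg _)
    (mul_klFun_div_nonneg (hρ.eigenvalues_nonneg i) (hσ.eigenvalues_pos j))
  have hterm_eq_zero : ∀ i j, Complex.normSq ((star (U : Matrix ι ι ℂ) * V) i j) *
      (q j * klFun (p i / q j)) = 0 ↔ (star (U : Matrix ι ι ℂ) * V) i j = 0 ∨ (p i : ℂ) = q j := by
    intro i j
    rw [mul_eq_zero, Complex.normSq_eq_zero, Complex.ofReal_inj,
      mul_klFun_div_eq_zero_iff (hρ.eigenvalues_nonneg i) (hσ.eigenvalues_pos j)]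
  have hrow_eq_zero : ∀ i, ∑ j, Complex.normSq ((star (U : Matrix ι ι ℂ) * V) i j) *
      (q j * klFun (p i / q j)) = 0 ↔
        ∀ j, (star (U : Matrix ι ι ℂ) * V) i j = 0 ∨ (p i : ℂ) = q j := fun i => by
    rw [Fintype.sum_eq_zero_iff_of_nonneg (hterm i), funext_iff]
    exact forall_congr' (hterm_eq_zero i)
  have hspectral : ρ = σ ↔ conjStarAlgAut ℂ _ U (diagonal fun i => (p i : ℂ)) =
      conjStarAlgAut ℂ _ V (diagonal fun j => (q j : ℂ)) := by
    conv_lhs => rw [hρ.isHermitian.spectral_theorem, hσ.isHermitian.spectral_theorem]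
    rfl
  rw [relEntropy_eq_sum_klFun hρ hσ, htr, sub_self, add_zero, Complex.ofReal_eq_zero,
    Fintype.sum_eq_zero_iff_of_nonneg fun i => Finset.sum_nonneg fun j _ => hterm i j, funext_iff,
    hspectral, conjStarAlgAut_diagonal_eq_iff]
  exact forall_congr' hrow_eq_zero

end Klein

section Gibbs

variable {H : Matrix ι ι ℂ}

noncomputable def gibbsState (H : Matrix ι ι ℂ) : Matrix ι ι ℂ :=
  (NormedSpace.exp (-H)).trace⁻¹ • NormedSpace.exp (-H)

lemma Matrix.IsHermitian.trace_cfc {A : Matrix ι ι ℂ} (hA : A.IsHermitian) (f : ℝ → ℝ) :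
    (cfc f A).trace = ∑ i, (f (hA.eigenvalues i) : ℂ) := by
  rw [hA.cfc_eq_conjStarAlgAut, trace_conjStarAlgAut, trace_diagonal]

-- `NormedSpace.exp` depends only on the topology, so any matrix norm gives access to the CFC lemma.
open scoped Matrix.Norms.L2Operator in
lemma Matrix.IsHermitian.exp_neg_eq_cfc (hH : H.IsHermitian) :
    NormedSpace.exp (-H) = cfc (fun x => Real.exp (-x)) H := by
  rw [← CFC.real_exp_eq_normedSpace_exp hH.neg.isSelfAdjoint,
    cfc_comp_neg Real.exp H (ha := hH.isSelfAdjoint)]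

lemma Matrix.IsHermitian.trace_exp_neg_pos [Nonempty ι] (hH : H.IsHermitian) :
    0 < (NormedSpace.exp (-H)).trace := by
  rw [hH.exp_neg_eq_cfc, hH.trace_cfc, ← Complex.ofReal_sum, Complex.zero_lt_real]
  exact Finset.sum_pos (fun i _ => Real.exp_pos _) Finset.univ_nonempty

lemma Matrix.IsHermitian.exists_gibbsState_eq_cfc [Nonempty ι] (hH : H.IsHermitian) :
    ∃ Z : ℝ, 0 < Z ∧ (NormedSpace.exp (-H)).trace = Z ∧
      gibbsState H = cfc (fun x => Z⁻¹ * Real.exp (-x)) H := by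
  obtain ⟨Z, hZ, hZtr⟩ := RCLike.pos_iff_exists_ofReal.mp hH.trace_exp_neg_pos
  have hZtr : (NormedSpace.exp (-H)).trace = Z := hZtr.symm
  refine ⟨Z, hZ, hZtr, ?_⟩
  rw [gibbsState, cfc_const_mul Z⁻¹ _ H, ← hH.exp_neg_eq_cfc, hZtr, ← Complex.ofReal_inv,
    Complex.coe_smul]

theorem Matrix.IsHermitian.trace_gibbsState [Nonempty ι] (hH : H.IsHermitian) :
    (gibbsState H).trace = 1 := by
  rw [gibbsState, trace_smul, smul_eq_mul, inv_mul_cancel₀ hH.trace_exp_neg_pos.ne']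

open scoped MatrixOrder in
theorem Matrix.IsHermitian.posDef_gibbsState [Nonempty ι] (hH : H.IsHermitian) :
    (gibbsState H).PosDef := by
  obtain ⟨Z, hZ, -, hG⟩ := hH.exists_gibbsState_eq_cfc
  rw [← isStrictlyPositive_iff_posDef, hG, cfc_isStrictlyPositive_iff _ H (ha := hH.isSelfAdjoint)]
  exact fun x _ => mul_pos (inv_pos.mpr hZ) (Real.exp_pos _)

theorem Matrix.IsHermitian.cfc_log_gibbsState [Nonempty ι] (hH : H.IsHermitian) :
    cfc Real.log (gibbsState H) = -H - Complex.log (NormedSpace.exp (-H)).trace • 1 := by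
  obtain ⟨Z, hZ, hZtr, hG⟩ := hH.exists_gibbsState_eq_cfc
  have hlog : (fun x => Real.log (Z⁻¹ * Real.exp (-x))) = fun x => -x - Real.log Z := by
    funext x
    rw [Real.log_mul (inv_ne_zero hZ.ne') (Real.exp_pos _).ne', Real.log_inv, Real.log_exp]
    ring
  rw [hG, ← cfc_comp' Real.log _ H (ha := hH.isSelfAdjoint), hlog,
    cfc_sub (fun x => -x) (fun _ => Real.log Z) H, cfc_neg_id H hH.isSelfAdjoint,
    cfc_const _ H hH.isSelfAdjoint, hZtr, ← Complex.ofReal_log hZ.le,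
    Algebra.algebraMap_eq_smul_one, Complex.coe_smul]

theorem Matrix.IsHermitian.relEntropy_gibbsState [Nonempty ι] (hH : H.IsHermitian)
    {ρ : Matrix ι ι ℂ} (hρ : ρ.trace = 1) :
    relEntropy ρ (gibbsState H) =
      (ρ * cfc Real.log ρ).trace + (H * ρ).trace + Complex.log (NormedSpace.exp (-H)).trace := by
  rw [relEntropy, hH.cfc_log_gibbsState, Matrix.mul_sub, Matrix.mul_sub, trace_sub, trace_sub,
    Matrix.mul_neg, trace_neg, mul_smul_comm, Matrix.mul_one, trace_smul, hρ, smul_eq_mul, mul_one,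
    trace_mul_comm ρ H]
  ring

end Gibbs

end

lemma matLog_eq_cfc {n : ℕ} {M : Matrix (Fin n) (Fin n) ℂ} (hM : M.IsHermitian) :
    matLog M = cfc Real.log M := by
  rw [hM.cfc_eq_conjStarAlgAut, conjStarAlgAut_apply, matLog, matFun, dif_pos hM]

/-- **Gibbs variational principle.**  For a Hermitian matrix `H` and any positive definite
density matrix `Γ`, `Tr[HΓ] + Tr[Γ log Γ] ≥ -log Tr[exp(-H)]`, with equality if and only if
`Γ = exp(-H)/Tr[exp(-H)]`. -/
theorem gibbs_variational_principle {n : ℕ}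
    (H : Matrix (Fin n) (Fin n) ℂ) (hH : H.IsHermitian)
    (Γ : Matrix (Fin n) (Fin n) ℂ) (hΓ : Γ.PosDef) (hΓtr : Γ.trace = 1) :
    -(Complex.log ((NormedSpace.exp (-H)).trace)) ≤
        (H * Γ).trace + (Γ * matLog Γ).trace ∧
      ((H * Γ).trace + (Γ * matLog Γ).trace = -(Complex.log ((NormedSpace.exp (-H)).trace)) ↔
        Γ = ((NormedSpace.exp (-H)).trace)⁻¹ • NormedSpace.exp (-H)) := by
  have := nonempty_of_trace_eq_one hΓtr
  have htr : Γ.trace = (gibbsState H).trace := hΓtr.trans hH.trace_gibbsState.symm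
  have hfree_energy : (H * Γ).trace + (Γ * matLog Γ).trace =
      -Complex.log (NormedSpace.exp (-H)).trace + relEntropy Γ (gibbsState H) := by
    rw [hH.relEntropy_gibbsState hΓtr, matLog_eq_cfc hΓ.isHermitian]
    ring
  rw [hfree_energy, le_add_iff_nonneg_right, add_eq_left,
    relEntropy_eq_zero_iff hΓ.posSemidef hH.posDef_gibbsState htr]
  exact ⟨relEntropy_nonneg hΓ.posSemidef hH.posDef_gibbsState htr, Iff.rfl⟩
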